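/- arXiv:2002.11112 — 4 statements merged into one kernel-verified Lean document; each statement's English description precedes it below -/
import Mathlib

section
/- Let K, L be star bodies in ℝⁿ, 0 ≤ i < n, and p ≥ 1. Define W̃_{-p,i}(K,L) = (1/n)∫_{S^{n-1}} ρ(K,u)^{n-i+p} ρ(L,u)^{-p} dS(u) and W̃ᵢ(K) = (1/n)∫_{S^{n-1}} ρ(K,u)^{n-i} dS(u). Then W̃_{-p,i}(K,L)^{n-i} ≥ W̃ᵢ(K)^{n-i+p} W̃ᵢ(L)^{-p}, with equality if and only if K and L are dilates. -/
open MeasureTheory Metric Real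

/-- The surface (spherical) measure on the unit sphere `S^{n-1} ⊆ ℝⁿ`. -/
noncomputable def sphereσ (n : ℕ) : Measure (sphere (0 : EuclideanSpace ℝ (Fin n)) 1) :=
  μH[(n : ℝ) - 1]

/-!
Write `q = n - i`. Since `ρK^q = (ρK^(q+p) ρL^(-p))^(q/(q+p)) (ρL^q)^(p/(q+p))`, Hölder's
inequality with weights `q/(q+p)` and `p/(q+p)`, raised to the power `q + p`, is the inequality.
Hölder is obtained by integrating weighted AM–GM for the normalised integrands, so in the equality
case AM–GM is an equality almost everywhere, hence everywhere by continuity, which means that the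
integrands are proportional. This needs `μH[n-1]` on the sphere to be finite and positive on open
sets: near a unit vector `x` the sphere is the graph of a Lipschitz map over the hyperplane `xᗮ`,
and the orthogonal projection onto `xᗮ` is `1`-Lipschitz, so caps are comparable with balls of
`xᗮ`, on which `μH[n-1]` is a Haar measure.
-/

open scoped NNReal

section RpowAlgebra

variable {q p : ℝ}

theorem rpow_add_mul_rpow_neg_eq_mul_rpow_iff {u v c : ℝ} (hu : 0 ≤ u) (hv : 0 < v) (hc : 0 ≤ c)
    (hqp : 0 < q + p) : u ^ (q + p) * v ^ (-p) = c * v ^ q ↔ u = c ^ (q + p)⁻¹ * v := by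
  have hvp : 0 < v ^ p := rpow_pos_of_pos hv p
  rw [rpow_neg hv.le, ← div_eq_mul_inv, div_eq_iff hvp.ne', mul_assoc, ← rpow_add hv,
    ← rpow_left_inj hu (by positivity) hqp.ne', mul_rpow (by positivity) hv.le,
    rpow_inv_rpow hc hqp.ne']

theorem rpow_add_mul_rpow_neg_rpow_mul_rpow_rpow {u v : ℝ} (hu : 0 ≤ u) (hv : 0 < v)
    (hqp : 0 < q + p) :
    (u ^ (q + p) * v ^ (-p)) ^ (q / (q + p)) * (v ^ q) ^ (p / (q + p)) = u ^ q := by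
  rw [mul_rpow (by positivity) (by positivity), ← rpow_mul hu, ← rpow_mul hv.le, ← rpow_mul hv.le,
    mul_assoc, ← rpow_add hv, mul_div_cancel₀ _ hqp.ne',
    show -p * (q / (q + p)) + q * (p / (q + p)) = 0 by ring, rpow_zero, mul_one]

variable {A B J : ℝ}

theorem rpow_add_mul_rpow_neg_eq_rpow (hB : 0 < B) (hJ : 0 ≤ J) (hqp : 0 < q + p) :
    (J ^ (q / (q + p)) * B ^ (p / (q + p))) ^ (q + p) * B ^ (-p) = J ^ q := by
  rw [mul_rpow (by positivity) (by positivity), ← rpow_mul hJ, ← rpow_mul hB.le,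
    div_mul_cancel₀ _ hqp.ne', div_mul_cancel₀ _ hqp.ne', mul_assoc, ← rpow_add hB,
    add_neg_cancel, rpow_zero, mul_one]

theorem rpow_add_mul_rpow_neg_le_rpow_iff (hA : 0 ≤ A) (hB : 0 < B) (hJ : 0 ≤ J) (hqp : 0 < q + p) :
    A ^ (q + p) * B ^ (-p) ≤ J ^ q ↔ A ≤ J ^ (q / (q + p)) * B ^ (p / (q + p)) := by
  rw [← rpow_add_mul_rpow_neg_eq_rpow hB hJ hqp,
    mul_le_mul_iff_of_pos_right (rpow_pos_of_pos hB _), rpow_le_rpow_iff hA (by positivity) hqp]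

theorem rpow_add_mul_rpow_neg_eq_rpow_iff (hA : 0 ≤ A) (hB : 0 < B) (hJ : 0 ≤ J) (hqp : 0 < q + p) :
    A ^ (q + p) * B ^ (-p) = J ^ q ↔ A = J ^ (q / (q + p)) * B ^ (p / (q + p)) := by
  rw [← rpow_add_mul_rpow_neg_eq_rpow hB hJ hqp,
    mul_left_inj' (rpow_pos_of_pos hB _).ne', rpow_left_inj hA (by positivity) hqp.ne']

end RpowAlgebra

section Holder

noncomputable def holderDefect {X : Type*} [MeasurableSpace X] (μ : Measure X) (a b : ℝ)
    (F G : X → ℝ) (x : X) : ℝ :=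
  a * (F x / ∫ y, F y ∂μ) + b * (G x / ∫ y, G y ∂μ) -
    (F x / ∫ y, F y ∂μ) ^ a * (G x / ∫ y, G y ∂μ) ^ b

variable {X : Type*} [MeasurableSpace X] {μ : Measure X} {F G : X → ℝ} {a b : ℝ}

theorem holderDefect_nonneg (ha : 0 ≤ a) (hb : 0 ≤ b) (hab : a + b = 1)
    (hF : ∀ x, 0 ≤ F x) (hG : ∀ x, 0 ≤ G x) (x : X) : 0 ≤ holderDefect μ a b F G x :=
  sub_nonneg.2 <| geom_mean_le_arith_mean2_weighted ha hb
    (div_nonneg (hF x) (integral_nonneg hF)) (div_nonneg (hG x) (integral_nonneg hG)) hab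

theorem integral_rpow_eq_integral_rpow_mul_rpow {f g : X → ℝ} {q p : ℝ} (hqp : 0 < q + p)
    (hfpos : ∀ x, 0 < f x) (hgpos : ∀ x, 0 < g x) :
    ∫ x, f x ^ q ∂μ =
      ∫ x, (f x ^ (q + p) * g x ^ (-p)) ^ (q / (q + p)) * (g x ^ q) ^ (p / (q + p)) ∂μ :=
  integral_congr_ae <| .of_forall fun x =>
    (rpow_add_mul_rpow_neg_rpow_mul_rpow_rpow (hfpos x).le (hgpos x) hqp).symm

variable [TopologicalSpace X] [CompactSpace X] [OpensMeasurableSpace X] [IsFiniteMeasure μ]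

theorem Continuous.integrable_of_compactSpace (hF : Continuous F) : Integrable F μ :=
  hF.integrable_of_hasCompactSupport (.of_compactSpace F)

variable [Nonempty X] [μ.IsOpenPosMeasure]

theorem integral_pos_of_continuous_of_pos (hF : Continuous F) (hpos : ∀ x, 0 < F x) :
    0 < ∫ x, F x ∂μ :=
  hF.integral_pos_of_hasCompactSupport_nonneg_nonzero (.of_compactSpace F) (fun x => (hpos x).le)
    (hpos (Classical.arbitrary X)).ne'

theorem integral_holderDefect (hab : a + b = 1) (hF : Continuous F) (hG : Continuous G)
    (hFpos : ∀ x, 0 < F x) (hGpos : ∀ x, 0 < G x) :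
    ∫ x, holderDefect μ a b F G x ∂μ =
      1 - (∫ x, F x ^ a * G x ^ b ∂μ) / ((∫ x, F x ∂μ) ^ a * (∫ x, G x ∂μ) ^ b) := by
  have hI := integral_pos_of_continuous_of_pos (μ := μ) hF hFpos
  have hJ := integral_pos_of_continuous_of_pos (μ := μ) hG hGpos
  have hdefect (x : X) : holderDefect μ a b F G x =
      a / (∫ y, F y ∂μ) * F x + b / (∫ y, G y ∂μ) * G x -
        ((∫ y, F y ∂μ) ^ a * (∫ y, G y ∂μ) ^ b)⁻¹ * (F x ^ a * G x ^ b) := by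
    rw [holderDefect, div_rpow (hFpos x).le hI.le, div_rpow (hGpos x).le hJ.le]
    field_simp
  have hFi : Integrable F μ := hF.integrable_of_compactSpace
  have hGi : Integrable G μ := hG.integrable_of_compactSpace
  have hFGi : Integrable (fun x => F x ^ a * G x ^ b) μ :=
    ((hF.rpow_const fun x => .inl (hFpos x).ne').mul
      (hG.rpow_const fun x => .inl (hGpos x).ne')).integrable_of_compactSpace
  simp_rw [hdefect]
  rw [integral_sub (by exact (hFi.const_mul _).add (hGi.const_mul _)) (hFGi.const_mul _),
    integral_add (hFi.const_mul _) (hGi.const_mul _),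
    integral_const_mul, integral_const_mul, integral_const_mul]
  field_simp
  linear_combination (∫ y, F y ∂μ) ^ a * (∫ y, G y ∂μ) ^ b * hab

theorem integral_rpow_mul_rpow_le (ha : 0 ≤ a) (hb : 0 ≤ b) (hab : a + b = 1)
    (hF : Continuous F) (hG : Continuous G) (hFpos : ∀ x, 0 < F x) (hGpos : ∀ x, 0 < G x) :
    ∫ x, F x ^ a * G x ^ b ∂μ ≤ (∫ x, F x ∂μ) ^ a * (∫ x, G x ∂μ) ^ b := by
  have hdefect : 0 ≤ ∫ x, holderDefect μ a b F G x ∂μ := integral_nonneg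
    (holderDefect_nonneg ha hb hab (fun x => (hFpos x).le) (fun x => (hGpos x).le))
  rw [integral_holderDefect hab hF hG hFpos hGpos, sub_nonneg] at hdefect
  have hI := integral_pos_of_continuous_of_pos (μ := μ) hF hFpos
  have hJ := integral_pos_of_continuous_of_pos (μ := μ) hG hGpos
  exact (div_le_one (by positivity)).1 hdefect

theorem integral_holderDefect_eq_zero_iff (ha : 0 < a) (hb : 0 < b) (hab : a + b = 1)
    (hF : Continuous F) (hG : Continuous G) (hFpos : ∀ x, 0 < F x) (hGpos : ∀ x, 0 < G x) :
    ∫ x, holderDefect μ a b F G x ∂μ = 0 ↔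
      ∀ x, F x / ∫ y, F y ∂μ = G x / ∫ y, G y ∂μ := by
  have hI := integral_pos_of_continuous_of_pos (μ := μ) hF hFpos
  have hJ := integral_pos_of_continuous_of_pos (μ := μ) hG hGpos
  have hcont : Continuous (holderDefect μ a b F G) := by
    unfold holderDefect
    exact ((continuous_const.mul (hF.div_const _)).add (continuous_const.mul (hG.div_const _))).sub
      (((hF.div_const _).rpow_const fun x => .inr ha.le).mul
        ((hG.div_const _).rpow_const fun x => .inr hb.le))
  rw [integral_eq_zero_iff_of_nonneg
      (holderDefect_nonneg ha.le hb.le hab (fun x => (hFpos x).le) (fun x => (hGpos x).le))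
      hcont.integrable_of_compactSpace,
    hcont.ae_eq_iff_eq μ continuous_zero, funext_iff]
  refine forall_congr' fun x => ?_
  rw [Pi.zero_apply, holderDefect, sub_eq_zero, eq_comm,
    geom_mean_eq_arith_mean2_weighted_iff_of_pos ha hb (div_pos (hFpos x) hI).le
      (div_pos (hGpos x) hJ).le hab]

theorem integral_rpow_mul_rpow_eq_iff (ha : 0 < a) (hb : 0 < b) (hab : a + b = 1)
    (hF : Continuous F) (hG : Continuous G) (hFpos : ∀ x, 0 < F x) (hGpos : ∀ x, 0 < G x) :
    ∫ x, F x ^ a * G x ^ b ∂μ = (∫ x, F x ∂μ) ^ a * (∫ x, G x ∂μ) ^ b ↔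
      ∃ c, 0 < c ∧ ∀ x, F x = c * G x := by
  have hI := integral_pos_of_continuous_of_pos (μ := μ) hF hFpos
  have hJ := integral_pos_of_continuous_of_pos (μ := μ) hG hGpos
  rw [← div_eq_one_iff_eq (by positivity), eq_comm, ← sub_eq_zero,
    ← integral_holderDefect hab hF hG hFpos hGpos,
    integral_holderDefect_eq_zero_iff ha hb hab hF hG hFpos hGpos]
  constructor
  · intro h
    refine ⟨(∫ x, F x ∂μ) / ∫ x, G x ∂μ, div_pos hI hJ, fun x => ?_⟩
    rw [div_mul_eq_mul_div, mul_div_assoc, ← h x]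
    field_simp
  · rintro ⟨c, hc, hFG⟩ x
    simp_rw [hFG, integral_const_mul]
    rw [mul_div_mul_left _ _ hc.ne']

theorem rpow_integral_mul_rpow_integral_le_and_eq_iff {f g : X → ℝ} {q p : ℝ} (hq : 0 < q)
    (hp : 0 < p) (hf : Continuous f) (hg : Continuous g) (hfpos : ∀ x, 0 < f x)
    (hgpos : ∀ x, 0 < g x) :
    (∫ x, f x ^ q ∂μ) ^ (q + p) * (∫ x, g x ^ q ∂μ) ^ (-p) ≤
        (∫ x, f x ^ (q + p) * g x ^ (-p) ∂μ) ^ q ∧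
      ((∫ x, f x ^ q ∂μ) ^ (q + p) * (∫ x, g x ^ q ∂μ) ^ (-p) =
          (∫ x, f x ^ (q + p) * g x ^ (-p) ∂μ) ^ q ↔
        ∃ c, 0 < c ∧ ∀ x, f x = c * g x) := by
  have hqp : 0 < q + p := add_pos hq hp
  have hFpos : ∀ x, 0 < f x ^ (q + p) * g x ^ (-p) := fun x =>
    mul_pos (rpow_pos_of_pos (hfpos x) _) (rpow_pos_of_pos (hgpos x) _)
  have hGpos : ∀ x, 0 < g x ^ q := fun x => rpow_pos_of_pos (hgpos x) q
  have hF : Continuous fun x => f x ^ (q + p) * g x ^ (-p) :=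
    (hf.rpow_const fun x => .inl (hfpos x).ne').mul (hg.rpow_const fun x => .inl (hgpos x).ne')
  have hG : Continuous fun x => g x ^ q := hg.rpow_const fun x => .inl (hgpos x).ne'
  have hA : 0 ≤ ∫ x, f x ^ q ∂μ := integral_nonneg fun x => (rpow_pos_of_pos (hfpos x) q).le
  have hB : 0 < ∫ x, g x ^ q ∂μ := integral_pos_of_continuous_of_pos hG hGpos
  have hJ : 0 ≤ ∫ x, f x ^ (q + p) * g x ^ (-p) ∂μ := integral_nonneg fun x => (hFpos x).le
  have hab : q / (q + p) + p / (q + p) = 1 := by field_simp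
  rw [rpow_add_mul_rpow_neg_le_rpow_iff hA hB hJ hqp,
    rpow_add_mul_rpow_neg_eq_rpow_iff hA hB hJ hqp,
    integral_rpow_eq_integral_rpow_mul_rpow hqp hfpos hgpos,
    integral_rpow_mul_rpow_eq_iff (by positivity) (by positivity) hab hF hG hFpos hGpos]
  refine ⟨integral_rpow_mul_rpow_le (by positivity) (by positivity) hab hF hG hFpos hGpos,
    ⟨fun ⟨c, hc, hfg⟩ => ⟨c ^ (q + p)⁻¹, by positivity, fun x =>
      (rpow_add_mul_rpow_neg_eq_mul_rpow_iff (hfpos x).le (hgpos x) hc.le hqp).1 (hfg x)⟩,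
    fun ⟨c, hc, hfg⟩ => ⟨c ^ (q + p), by positivity, fun x =>
      (rpow_add_mul_rpow_neg_eq_mul_rpow_iff (hfpos x).le (hgpos x) (by positivity) hqp).2 ?_⟩⟩⟩
  rw [rpow_rpow_inv hc.le hqp.ne', hfg x]

end Holder

theorem abs_sqrt_one_sub_sq_sub_sqrt_one_sub_sq_le {u v : ℝ} (hu : |u| ≤ 1 / 2) (hv : |v| ≤ 1 / 2) :
    |√(1 - u ^ 2) - √(1 - v ^ 2)| ≤ |u - v| := by
  have hu2 : u ^ 2 ≤ 1 / 4 := by nlinarith [sq_abs u, abs_nonneg u]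
  have hv2 : v ^ 2 ≤ 1 / 4 := by nlinarith [sq_abs v, abs_nonneg v]
  have hU := sq_sqrt (show 0 ≤ 1 - u ^ 2 by linarith)
  have hV := sq_sqrt (show 0 ≤ 1 - v ^ 2 by linarith)
  have hU' : 1 / 2 ≤ √(1 - u ^ 2) := by nlinarith [sqrt_nonneg (1 - u ^ 2)]
  have hV' : 1 / 2 ≤ √(1 - v ^ 2) := by nlinarith [sqrt_nonneg (1 - v ^ 2)]
  have huv : |u + v| ≤ 1 := (abs_add_le u v).trans (by linarith)
  have hprod :
      (√(1 - u ^ 2) - √(1 - v ^ 2)) * (√(1 - u ^ 2) + √(1 - v ^ 2)) = (v - u) * (u + v) := by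
    linear_combination hU - hV
  calc |√(1 - u ^ 2) - √(1 - v ^ 2)|
      ≤ |√(1 - u ^ 2) - √(1 - v ^ 2)| * (√(1 - u ^ 2) + √(1 - v ^ 2)) :=
        le_mul_of_one_le_right (abs_nonneg _) (by linarith)
    _ = |v - u| * |u + v| := by
        rw [← abs_of_pos (show 0 < √(1 - u ^ 2) + √(1 - v ^ 2) by linarith), ← abs_mul, hprod,
          abs_mul]
    _ ≤ |u - v| := by
        rw [abs_sub_comm]
        exact mul_le_of_le_one_right (abs_nonneg _) huv

section UnitSphere

variable {E : Type*} [NormedAddCommGroup E] [InnerProductSpace ℝ E] {x : E}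

noncomputable def hemisphereLift (x : E) (y : (ℝ ∙ x)ᗮ) : E := y + √(1 - ‖y‖ ^ 2) • x

theorem norm_hemisphereLift (hx : ‖x‖ = 1) {y : (ℝ ∙ x)ᗮ} (hy : ‖y‖ ≤ 1) :
    ‖hemisphereLift x y‖ = 1 := by
  have horth : inner ℝ (y : E) (√(1 - ‖y‖ ^ 2) • x) = 0 := by
    rw [real_inner_smul_right, Submodule.mem_orthogonal_singleton_iff_inner_left.1 y.2, mul_zero]
  have h := norm_add_sq_eq_norm_sq_add_norm_sq_real horth
  rw [norm_smul, hx, mul_one, norm_of_nonneg (sqrt_nonneg _),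
    mul_self_sqrt (by nlinarith [norm_nonneg y]), Submodule.norm_coe] at h
  rw [hemisphereLift]
  nlinarith [norm_nonneg ((y : E) + √(1 - ‖y‖ ^ 2) • x)]

theorem orthogonalProjectionOnto_hemisphereLift (y : (ℝ ∙ x)ᗮ) :
    (ℝ ∙ x)ᗮ.orthogonalProjectionOnto (hemisphereLift x y) = y := by
  rw [hemisphereLift, map_add, map_smul,
    Submodule.orthogonalProjectionOnto_mem_subspace_eq_self,
    Submodule.orthogonalProjectionOnto_apply_of_mem_orthogonal
      (Submodule.le_orthogonal_orthogonal _ (Submodule.mem_span_singleton_self x)),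
    smul_zero, add_zero]

theorem lipschitzOnWith_hemisphereLift (hx : ‖x‖ = 1) :
    LipschitzOnWith 2 (hemisphereLift x) (closedBall 0 (1 / 2)) := by
  have hheight :
      LipschitzOnWith 1 (fun y : (ℝ ∙ x)ᗮ => √(1 - ‖y‖ ^ 2) • x) (closedBall 0 (1 / 2)) := by
    refine LipschitzOnWith.of_dist_le_mul fun y hy z hz => ?_
    rw [mem_closedBall, dist_zero_right] at hy hz
    rw [dist_eq_norm, ← sub_smul, norm_smul, hx, mul_one, NNReal.coe_one, one_mul, dist_eq_norm,
      Real.norm_eq_abs]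
    refine (abs_sqrt_one_sub_sq_sub_sqrt_one_sub_sq_le ?_ ?_).trans (abs_norm_sub_norm_le y z) <;>
      rwa [abs_of_nonneg (norm_nonneg _)]
  rw [← one_add_one_eq_two]
  exact (LipschitzWith.subtype_val _).lipschitzOnWith.add hheight

theorem sphere_inter_closedBall_subset_image_hemisphereLift (hx : ‖x‖ = 1) :
    sphere (0 : E) 1 ∩ closedBall x (1 / 2) ⊆ hemisphereLift x '' closedBall 0 (1 / 2) := by
  rintro z ⟨hz, hzx⟩
  rw [mem_sphere_zero_iff_norm] at hz
  rw [mem_closedBall, dist_eq_norm] at hzx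
  set t := inner ℝ x z
  have hy : z - t • x ∈ (ℝ ∙ x)ᗮ := by
    rw [Submodule.mem_orthogonal_singleton_iff_inner_right, inner_sub_right, real_inner_smul_right,
      real_inner_self_eq_norm_sq, hx]
    ring
  have ht : 7 / 8 ≤ t := by
    have := norm_sub_sq_real z x
    rw [hz, hx, real_inner_comm] at this
    nlinarith [norm_nonneg (z - x)]
  have hy2 : ‖z - t • x‖ ^ 2 = 1 - t ^ 2 := by
    rw [norm_sub_sq_real, hz, real_inner_smul_right, norm_smul, hx, real_inner_comm,
      Real.norm_eq_abs, mul_one, sq_abs]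
    ring
  refine ⟨⟨z - t • x, hy⟩, ?_, ?_⟩
  · rw [mem_closedBall, dist_zero_right, Submodule.coe_norm]
    nlinarith [norm_nonneg (z - t • x)]
  · rw [hemisphereLift, Submodule.coe_norm, hy2, sub_sub_cancel, sqrt_sq (by linarith),
      sub_add_cancel]

theorem dist_hemisphereLift_le (hx : ‖x‖ = 1) {y : (ℝ ∙ x)ᗮ} (hy : ‖y‖ ≤ 1) :
    dist (hemisphereLift x y) x ≤ 2 * ‖y‖ := by
  have hs : 0 ≤ 1 - ‖y‖ ^ 2 := by nlinarith [norm_nonneg y]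
  have hs1 : √(1 - ‖y‖ ^ 2) ≤ 1 := sqrt_le_one.2 (by nlinarith [norm_nonneg y])
  have hgap : 1 - √(1 - ‖y‖ ^ 2) ≤ ‖y‖ := by
    nlinarith [sq_sqrt hs, sqrt_nonneg (1 - ‖y‖ ^ 2), norm_nonneg y]
  calc dist (hemisphereLift x y) x = ‖(y : E) + (√(1 - ‖y‖ ^ 2) - 1) • x‖ := by
        rw [dist_eq_norm, hemisphereLift, sub_smul, one_smul, add_sub_assoc]
    _ ≤ ‖y‖ + |√(1 - ‖y‖ ^ 2) - 1| := by
        refine (norm_add_le _ _).trans ?_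
        rw [norm_smul, hx, mul_one, Real.norm_eq_abs, Submodule.coe_norm]
    _ ≤ 2 * ‖y‖ := by
        rw [abs_sub_comm, abs_of_nonneg (by linarith)]
        linarith

variable [FiniteDimensional ℝ E] [MeasurableSpace E] [BorelSpace E] {d : ℕ}

theorem isAddHaarMeasure_hausdorffMeasure_orthogonal_span_singleton
    (hd : Module.finrank ℝ E = d + 1) (hx : x ≠ 0) :
    (μH[d] : Measure (ℝ ∙ x)ᗮ).IsAddHaarMeasure := by
  have : Fact (Module.finrank ℝ E = d + 1) := ⟨hd⟩
  have h := isAddHaarMeasure_hausdorffMeasure (E := (ℝ ∙ x)ᗮ)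
  rwa [Submodule.finrank_orthogonal_span_singleton (n := d) hx] at h

theorem hausdorffMeasure_sphere_inter_closedBall_lt_top (hd : Module.finrank ℝ E = d + 1)
    (hx : ‖x‖ = 1) : μH[d] (sphere (0 : E) 1 ∩ closedBall x (1 / 2)) < ⊤ := by
  have := isAddHaarMeasure_hausdorffMeasure_orthogonal_span_singleton hd
    (norm_ne_zero_iff.1 (hx ▸ one_ne_zero))
  calc μH[d] (sphere (0 : E) 1 ∩ closedBall x (1 / 2))
      ≤ μH[d] (hemisphereLift x '' closedBall 0 (1 / 2)) :=
        measure_mono (sphere_inter_closedBall_subset_image_hemisphereLift hx)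
    _ ≤ 2 ^ (d : ℝ) * μH[d] (closedBall (0 : (ℝ ∙ x)ᗮ) (1 / 2)) :=
        (lipschitzOnWith_hemisphereLift hx).hausdorffMeasure_image_le d.cast_nonneg
    _ < ⊤ := ENNReal.mul_lt_top (by simp) measure_closedBall_lt_top

theorem hausdorffMeasure_sphere_lt_top (hd : Module.finrank ℝ E = d + 1) :
    μH[d] (sphere (0 : E) 1) < ⊤ := by
  obtain ⟨t, hts, ht, hcover⟩ :=
    finite_cover_balls_of_compact (isCompact_sphere (0 : E) 1) (one_half_pos (α := ℝ))
  have hsub : sphere (0 : E) 1 ⊆ ⋃ x ∈ t, sphere (0 : E) 1 ∩ closedBall x (1 / 2) := by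
    intro z hz
    obtain ⟨x, hxt, hzx⟩ := Set.mem_iUnion₂.1 (hcover hz)
    exact Set.mem_iUnion₂.2 ⟨x, hxt, hz, ball_subset_closedBall hzx⟩
  exact (measure_mono hsub).trans_lt <| measure_biUnion_lt_top ht fun x hx =>
    hausdorffMeasure_sphere_inter_closedBall_lt_top hd (mem_sphere_zero_iff_norm.1 (hts hx))

theorem hausdorffMeasure_sphere_inter_ball_pos (hd : Module.finrank ℝ E = d + 1)
    (hx : ‖x‖ = 1) {r : ℝ} (hr : 0 < r) : 0 < μH[d] (sphere (0 : E) 1 ∩ ball x r) := by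
  have := isAddHaarMeasure_hausdorffMeasure_orthogonal_span_singleton hd
    (norm_ne_zero_iff.1 (hx ▸ one_ne_zero))
  set δ := min 1 (r / 2)
  have hsub : ball (0 : (ℝ ∙ x)ᗮ) δ ⊆
      (ℝ ∙ x)ᗮ.orthogonalProjectionOnto '' (sphere (0 : E) 1 ∩ ball x r) := by
    intro y hy
    rw [mem_ball, dist_zero_right, lt_min_iff] at hy
    refine ⟨hemisphereLift x y, ⟨?_, ?_⟩, orthogonalProjectionOnto_hemisphereLift y⟩
    · exact mem_sphere_zero_iff_norm.2 (norm_hemisphereLift hx hy.1.le)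
    · exact mem_ball.2 ((dist_hemisphereLift_le hx hy.1.le).trans_lt (by linarith))
  calc 0 < μH[d] (ball (0 : (ℝ ∙ x)ᗮ) δ) := measure_ball_pos _ _ (by positivity)
    _ ≤ μH[d] ((ℝ ∙ x)ᗮ.orthogonalProjectionOnto '' (sphere (0 : E) 1 ∩ ball x r)) :=
        measure_mono hsub
    _ ≤ μH[d] (sphere (0 : E) 1 ∩ ball x r) :=
        hausdorffMeasure_orthogonalProjectionOnto_le _ _ _ d.cast_nonneg

theorem isFiniteMeasure_hausdorffMeasure_sphere (hd : Module.finrank ℝ E = d + 1) :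
    IsFiniteMeasure (μH[d] : Measure (sphere (0 : E) 1)) := by
  refine ⟨?_⟩
  rw [← isometry_subtype_coe.hausdorffMeasure_image (.inl d.cast_nonneg), Set.image_univ,
    Subtype.range_coe]
  exact hausdorffMeasure_sphere_lt_top hd

theorem isOpenPosMeasure_hausdorffMeasure_sphere (hd : Module.finrank ℝ E = d + 1) :
    (μH[d] : Measure (sphere (0 : E) 1)).IsOpenPosMeasure := by
  refine ⟨fun U hU ⟨u, hu⟩ => ?_⟩
  obtain ⟨r, hr, hball⟩ := Metric.isOpen_iff.1 hU u hu
  have hsub : sphere (0 : E) 1 ∩ ball (u : E) r ⊆ Subtype.val '' U := fun z ⟨hz, hzu⟩ =>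
    ⟨⟨z, hz⟩, hball (by rwa [mem_ball, Subtype.dist_eq]), rfl⟩
  rw [← isometry_subtype_coe.hausdorffMeasure_image (.inl d.cast_nonneg)]
  exact ((hausdorffMeasure_sphere_inter_ball_pos hd (mem_sphere_zero_iff_norm.1 u.2) hr).trans_le
    (measure_mono hsub)).ne'

end UnitSphere

/-- The Minkowski inequality for the mixed `p`-harmonic quermassintegral:
`W̃_{-p,i}(K,L)^{n-i} ≥ W̃ᵢ(K)^{n-i+p} W̃ᵢ(L)^{-p}`, with equality iff `K,L` are dilates. -/
theorem mixed_p_harmonic_quermassintegral_minkowski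
    (n i : ℕ) (hi : i < n) (p : ℝ) (hp : 1 ≤ p)
    (ρK ρL : sphere (0 : EuclideanSpace ℝ (Fin n)) 1 → ℝ)
    (hKc : Continuous ρK) (hLc : Continuous ρL)
    (hKpos : ∀ u, 0 < ρK u) (hLpos : ∀ u, 0 < ρL u)
    (Wp WK WL : ℝ)
    (hWp : Wp = (1 / n) * ∫ u, (ρK u) ^ ((n : ℝ) - i + p) * (ρL u) ^ (-p) ∂(sphereσ n))
    (hWK : WK = (1 / n) * ∫ u, (ρK u) ^ (n - i) ∂(sphereσ n))
    (hWL : WL = (1 / n) * ∫ u, (ρL u) ^ (n - i) ∂(sphereσ n)) :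
    Wp ^ (n - i) ≥ WK ^ ((n : ℝ) - i + p) * WL ^ (-p) ∧
      (Wp ^ (n - i) = WK ^ ((n : ℝ) - i + p) * WL ^ (-p) ↔
        ∃ c : ℝ, 0 < c ∧ ∀ u, ρK u = c * ρL u) := by
  have hd : Module.finrank ℝ (EuclideanSpace ℝ (Fin n)) = (n - 1 : ℕ) + 1 := by
    rw [finrank_euclideanSpace_fin]; omega
  have hσ : sphereσ n = μH[((n - 1 : ℕ) : ℝ)] := by
    rw [sphereσ, Nat.cast_sub (by omega : 1 ≤ n), Nat.cast_one]
  have : IsFiniteMeasure (sphereσ n) := hσ ▸ isFiniteMeasure_hausdorffMeasure_sphere hd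
  have : (sphereσ n).IsOpenPosMeasure := hσ ▸ isOpenPosMeasure_hausdorffMeasure_sphere hd
  have : Nonempty (sphere (0 : EuclideanSpace ℝ (Fin n)) 1) :=
    ⟨⟨EuclideanSpace.single ⟨0, by omega⟩ 1, by simp⟩⟩
  have : ((n : ℝ≥0)⁻¹ • sphereσ n).IsOpenPosMeasure := by
    rw [ENNReal.smul_def]
    exact Measure.isOpenPosMeasure_smul _ (by simp; omega)
  have hν (h : sphere (0 : EuclideanSpace ℝ (Fin n)) 1 → ℝ) :
      (1 / n) * ∫ u, h u ∂(sphereσ n) = ∫ u, h u ∂((n : ℝ≥0)⁻¹ • sphereσ n) := by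
    rw [integral_smul_nnreal_measure, NNReal.smul_def, NNReal.coe_inv, NNReal.coe_natCast,
      smul_eq_mul, one_div]
  have hq : (n : ℝ) - i = ((n - i : ℕ) : ℝ) := by rw [Nat.cast_sub hi.le]
  rw [hν] at hWp hWK hWL
  simp only [← rpow_natCast, hq] at hWp hWK hWL ⊢
  subst hWp hWK hWL
  obtain ⟨hle, heq⟩ := rpow_integral_mul_rpow_integral_le_and_eq_iff (μ := (n : ℝ≥0)⁻¹ • sphereσ n)
    (Nat.cast_pos.2 (Nat.sub_pos_of_lt hi)) (zero_lt_one.trans_le hp) hKc hLc hKpos hLpos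
  exact ⟨hle, eq_comm.trans heq⟩
end

section
/- Let φ : (0,∞) → (0,∞) be convex and strictly decreasing, and let L₁, K₁, ..., Kₙ be star bodies in ℝⁿ. Define the Orlicz harmonic sum K₁+̂_φL₁ by φ(ρ(K₁,u)/ρ(K₁+̂_φL₁,u)) + φ(ρ(L₁,u)/ρ(K₁+̂_φL₁,u)) = φ(1) for all u. Then φ(1)·Ṽ(K₁+̂_φL₁, K₂,...,Kₙ) = Ṽ_φ(K₁+̂_φL₁, K₁, K₂,...,Kₙ) + Ṽ_φ(K₁+̂_φL₁, L₁, K₂,...,Kₙ). -/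
/-!
Integrating the pointwise identity `φ (ρK / ρQ) + φ (ρL / ρQ) = φ 1` against
`ρQ · ρ₂ ⋯ ρₙ` gives the decomposition; the only analytic input is integrability. The integrands
are continuous on the compact sphere, and the sphere has finite `(n - 1)`-dimensional Hausdorff
measure: it is covered by the radial projections of the `2n` facets of the cube `[-1, 1]ⁿ`, and
the radial projection `x ↦ x / ‖x‖` is `2`-Lipschitz outside the open unit ball.
-/

open MeasureTheory Metric Set Finset

open scoped NNReal

theorem lipschitzOnWith_inv_norm_smul {E : Type*} [NormedAddCommGroup E] [NormedSpace ℝ E] :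
    LipschitzOnWith 2 (fun x : E => ‖x‖⁻¹ • x) {x | 1 ≤ ‖x‖} := by
  refine LipschitzOnWith.of_dist_le_mul fun x (hx : 1 ≤ ‖x‖) y (hy : 1 ≤ ‖y‖) => ?_
  have hx0 : 0 < ‖x‖ := one_pos.trans_le hx
  have hy0 : 0 < ‖y‖ := one_pos.trans_le hy
  have hsplit : ‖x‖⁻¹ • x - ‖y‖⁻¹ • y = ‖x‖⁻¹ • (x - y) + (‖x‖⁻¹ - ‖y‖⁻¹) • y := by
    rw [smul_sub, sub_smul]; abel
  have h₁ : ‖‖x‖⁻¹ • (x - y)‖ ≤ ‖x - y‖ := by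
    rw [norm_smul, norm_inv, norm_norm]
    exact mul_le_of_le_one_left (norm_nonneg _) (inv_le_one_of_one_le₀ hx)
  have h₂ : ‖(‖x‖⁻¹ - ‖y‖⁻¹) • y‖ ≤ ‖x - y‖ := calc
    ‖(‖x‖⁻¹ - ‖y‖⁻¹) • y‖ = |‖y‖ - ‖x‖| / ‖x‖ := by
      rw [norm_smul, Real.norm_eq_abs, inv_sub_inv hx0.ne' hy0.ne', abs_div,
        abs_of_pos (mul_pos hx0 hy0)]
      field_simp
    _ ≤ ‖x - y‖ := by
      rw [div_le_iff₀ hx0, abs_sub_comm]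
      nlinarith [abs_norm_sub_norm_le x y, norm_nonneg (x - y)]
  rw [dist_eq_norm, dist_eq_norm, hsplit, NNReal.coe_ofNat]
  linarith [norm_add_le (‖x‖⁻¹ • (x - y)) ((‖x‖⁻¹ - ‖y‖⁻¹) • y)]

theorem LipschitzOnWith.hausdorffMeasure_image_lt_top {X Y : Type*} [EMetricSpace X]
    [EMetricSpace Y] [MeasurableSpace X] [BorelSpace X] [MeasurableSpace Y] [BorelSpace Y]
    {K : ℝ≥0} {f : X → Y} {s : Set X} {d : ℝ} (hf : LipschitzOnWith K f s) (hd : 0 ≤ d)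
    (hs : μH[d] s < ⊤) : μH[d] (f '' s) < ⊤ :=
  (hf.hausdorffMeasure_image_le hd).trans_lt
    (ENNReal.mul_lt_top (ENNReal.rpow_lt_top_of_nonneg hd ENNReal.coe_ne_top) hs)

section CubeFace

variable {ι : Type*} [Fintype ι] [DecidableEq ι]

/-- Inserts `s` as the `i`-th coordinate; the image of the unit ball is a facet of the cube
`[-1, 1]^ι` when `|s| = 1`. -/
noncomputable def cubeFace (i : ι) (s : ℝ) (y : {j // j ≠ i} → ℝ) : EuclideanSpace ℝ ι :=
  WithLp.toLp 2 fun j => if h : j = i then s else y ⟨j, h⟩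

theorem lipschitzWith_cubeFace (i : ι) (s : ℝ) :
    LipschitzWith ((Fintype.card ι : ℝ≥0) ^ (2⁻¹ : ℝ)) (cubeFace i s) := by
  have hext : LipschitzWith 1
      fun (y : {j // j ≠ i} → ℝ) j => if h : j = i then s else y ⟨j, h⟩ := by
    refine LipschitzWith.of_dist_le_mul fun y y' => ?_
    rw [NNReal.coe_one, one_mul, dist_pi_le_iff dist_nonneg]
    intro j
    by_cases h : j = i
    · simp [h]
    · simpa [h] using dist_le_pi_dist y y' ⟨j, h⟩
  have := (PiLp.lipschitzWith_toLp 2 fun _ : ι => ℝ).comp hext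
  rwa [mul_one, one_div, ENNReal.toReal_inv, ENNReal.toReal_ofNat] at this

theorem hausdorffMeasure_cubeFace_lt_top (i : ι) (s : ℝ) :
    μH[Fintype.card {j // j ≠ i}] (cubeFace i s '' closedBall 0 1) < ⊤ := by
  refine (lipschitzWith_cubeFace i s).lipschitzOnWith.hausdorffMeasure_image_lt_top
    (Nat.cast_nonneg _) ?_
  rw [hausdorffMeasure_pi_real]
  exact isCompact_closedBall _ _ |>.measure_lt_top

theorem one_le_norm_cubeFace {i : ι} {s : ℝ} (hs : |s| = 1) (y : {j // j ≠ i} → ℝ) :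
    1 ≤ ‖cubeFace i s y‖ := by
  simpa [cubeFace, hs] using PiLp.norm_apply_le (cubeFace i s y) i

theorem sphere_subset_iUnion_cubeFace :
    sphere (0 : EuclideanSpace ℝ ι) 1 ⊆ ⋃ i, ⋃ s ∈ ({1, -1} : Finset ℝ),
      (fun x => ‖x‖⁻¹ • x) '' (cubeFace i s '' closedBall 0 1) := by
  intro x hx
  have hx0 : x ≠ 0 := ne_zero_of_mem_unit_sphere ⟨x, hx⟩
  obtain ⟨j, hj⟩ : ∃ j, x j ≠ 0 := by
    by_contra! h
    exact hx0 (PiLp.ext h)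
  have : Nonempty ι := ⟨j⟩
  obtain ⟨i, hi⟩ := Finite.exists_max fun j => |x j|
  have hxi : 0 < |x i| := (abs_pos.mpr hj).trans_le (hi j)
  simp only [mem_iUnion, mem_image]
  refine ⟨i, x i / |x i|, ?_, |x i|⁻¹ • x, ⟨fun j => x j / |x i|, ?_, ?_⟩, ?_⟩
  · rcases (abs_pos.mp hxi).lt_or_gt with h | h
    · simp [abs_of_neg h, div_neg, div_self h.ne]
    · simp [abs_of_pos h, div_self h.ne']
  · rw [mem_closedBall_zero_iff, pi_norm_le_iff_of_nonneg zero_le_one]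
    intro k
    rw [norm_div, Real.norm_eq_abs, Real.norm_eq_abs, abs_abs, div_le_one hxi]
    exact hi k
  · ext k
    by_cases h : k = i
    · subst h; simp [cubeFace, div_eq_inv_mul]
    · simp [cubeFace, div_eq_inv_mul, h]
  · rw [norm_smul, mem_sphere_zero_iff_norm.mp hx, norm_inv, Real.norm_eq_abs, abs_abs, mul_one,
      inv_inv, smul_smul, mul_inv_cancel₀ hxi.ne', one_smul]

end CubeFace

theorem hausdorffMeasure_sphere_lt_top_s12 {ι : Type*} [Fintype ι] [Nonempty ι] :
    μH[(Fintype.card ι : ℝ) - 1] (sphere (0 : EuclideanSpace ℝ ι) 1) < ⊤ := by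
  classical
  have hdim (i : ι) : (Fintype.card ι : ℝ) - 1 = Fintype.card {j // j ≠ i} := by
    rw [Fintype.card_subtype_compl, Fintype.card_subtype_eq, Nat.cast_sub Fintype.card_pos,
      Nat.cast_one]
  refine (measure_mono sphere_subset_iUnion_cubeFace).trans_lt ?_
  refine (measure_iUnion_fintype_le _ _).trans_lt (ENNReal.sum_lt_top.mpr fun i _ => ?_)
  refine (measure_biUnion_finset_le _ _).trans_lt (ENNReal.sum_lt_top.mpr fun s hs => ?_)
  have hs : |s| = 1 := by
    rcases Finset.mem_insert.mp hs with rfl | hs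
    · exact abs_one
    · rw [Finset.mem_singleton.mp hs, abs_neg, abs_one]
  have hface : cubeFace i s '' closedBall 0 1 ⊆ {x | 1 ≤ ‖x‖} :=
    image_subset_iff.mpr fun y _ => one_le_norm_cubeFace hs y
  rw [hdim i]
  exact (lipschitzOnWith_inv_norm_smul.mono hface).hausdorffMeasure_image_lt_top
    (Nat.cast_nonneg _) (hausdorffMeasure_cubeFace_lt_top i s)

instance (n : ℕ) : IsFiniteMeasure (sphereσ n) := by
  rcases n.eq_zero_or_pos with rfl | hn
  · have : IsEmpty (sphere (0 : EuclideanSpace ℝ (Fin 0)) 1) := by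
      rw [sphere_eq_empty_of_subsingleton one_ne_zero]
      infer_instance
    infer_instance
  · have : Nonempty (Fin n) := ⟨⟨0, hn⟩⟩
    have hd : (0 : ℝ) ≤ n - 1 := sub_nonneg.mpr (Nat.one_le_cast.mpr hn)
    constructor
    rw [sphereσ, ← isometry_subtype_coe.hausdorffMeasure_image (Or.inl hd), image_univ,
      Subtype.range_coe]
    simpa using hausdorffMeasure_sphere_lt_top_s12 (ι := Fin n)

theorem Continuous.integrable_sphereσ {n : ℕ} {f : sphere (0 : EuclideanSpace ℝ (Fin n)) 1 → ℝ}
    (hf : Continuous f) : Integrable f (sphereσ n) :=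
  hf.integrable_of_hasCompactSupport (HasCompactSupport.of_compactSpace f)

theorem integral_mul_add_integral_mul_of_add_eq {α : Type*} [MeasurableSpace α] {μ : Measure α}
    {f g X : α → ℝ} {c : ℝ} (hfX : Integrable (fun u => f u * X u) μ) (hX : Integrable X μ)
    (hfg : ∀ u, f u + g u = c) :
    ∫ u, f u * X u ∂μ + ∫ u, g u * X u ∂μ = c * ∫ u, X u ∂μ := by
  have hg : (fun u => g u * X u) = fun u => c * X u - f u * X u :=
    funext fun u => by rw [← hfg u]; ring
  rw [hg, integral_sub (hX.const_mul c) hfX, integral_const_mul]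
  ring

/-- `ρK`, `ρL`, `ρQ` are the radial functions of `K₁`, `L₁`, `Q = K₁ +̂_φ L₁`, and `ρ 2, …, ρ n`
those of `K₂, …, Kₙ`. -/
theorem orlicz_harmonic_sum_decomposition_general
    (n : ℕ)
    (φ : ℝ → ℝ)
    (hφconv : ConvexOn ℝ (Ioi 0) φ)
    (ρK ρL ρQ : sphere (0 : EuclideanSpace ℝ (Fin n)) 1 → ℝ)
    (ρ : ℕ → (sphere (0 : EuclideanSpace ℝ (Fin n)) 1 → ℝ))
    (hKc : Continuous ρK) (hQc : Continuous ρQ)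
    (hKpos : ∀ u, 0 < ρK u) (hQpos : ∀ u, 0 < ρQ u)
    (hc : ∀ i, 2 ≤ i → i ≤ n → Continuous (ρ i))
    (hsum : ∀ u, φ (ρK u / ρQ u) + φ (ρL u / ρQ u) = φ 1)
    (Vt VφK VφL : ℝ)
    (hVt : Vt = (1 / n) * ∫ u, ρQ u * ∏ j ∈ Finset.Icc 2 n, ρ j u ∂(sphereσ n))
    (hVφK : VφK = (1 / n) * ∫ u,
      φ (ρK u / ρQ u) * (ρQ u * ∏ j ∈ Finset.Icc 2 n, ρ j u) ∂(sphereσ n))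
    (hVφL : VφL = (1 / n) * ∫ u,
      φ (ρL u / ρQ u) * (ρQ u * ∏ j ∈ Finset.Icc 2 n, ρ j u) ∂(sphereσ n)) :
    φ 1 * Vt = VφK + VφL := by
  have hX : Continuous fun u => ρQ u * ∏ j ∈ Finset.Icc 2 n, ρ j u :=
    hQc.mul <| continuous_finsetProd _ fun j hj => hc j (mem_Icc.mp hj).1 (mem_Icc.mp hj).2
  have hφK : Continuous fun u => φ (ρK u / ρQ u) :=
    (hφconv.continuousOn isOpen_Ioi).comp_continuous (hKc.div hQc fun u => (hQpos u).ne')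
      fun u => div_pos (hKpos u) (hQpos u)
  rw [hVt, hVφK, hVφL, ← mul_add, integral_mul_add_integral_mul_of_add_eq
    (hφK.mul hX).integrable_sphereσ hX.integrable_sphereσ hsum]
  ring

/-- Decomposition identity for the Orlicz harmonic sum `Q = K₁ +̂_φ L₁`:
`φ(1)·Ṽ(Q,K₂,...,Kₙ) = Ṽ_φ(Q,K₁,K₂,...,Kₙ) + Ṽ_φ(Q,L₁,K₂,...,Kₙ)`.
The star bodies `K₂,...,Kₙ` have radial functions `ρ 2, ..., ρ n`. -/
theorem orlicz_harmonic_sum_decomposition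
    (n : ℕ) (hn : 0 < n)
    (φ : ℝ → ℝ)
    (hφconv : ConvexOn ℝ (Ioi 0) φ)
    (hφanti : StrictAntiOn φ (Ioi 0))
    (ρK ρL ρQ : sphere (0 : EuclideanSpace ℝ (Fin n)) 1 → ℝ)
    (ρ : ℕ → (sphere (0 : EuclideanSpace ℝ (Fin n)) 1 → ℝ))
    (hKc : Continuous ρK) (hLc : Continuous ρL) (hQc : Continuous ρQ)
    (hKpos : ∀ u, 0 < ρK u) (hLpos : ∀ u, 0 < ρL u) (hQpos : ∀ u, 0 < ρQ u)
    (hc : ∀ i, 2 ≤ i → i ≤ n → Continuous (ρ i))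
    (hpos : ∀ i, 2 ≤ i → i ≤ n → ∀ u, 0 < ρ i u)
    (hsum : ∀ u, φ (ρK u / ρQ u) + φ (ρL u / ρQ u) = φ 1)
    (Vt VφK VφL : ℝ)
    (hVt : Vt = (1 / n) * ∫ u, ρQ u * ∏ j ∈ Finset.Icc 2 n, ρ j u ∂(sphereσ n))
    (hVφK : VφK = (1 / n) * ∫ u,
      φ (ρK u / ρQ u) * (ρQ u * ∏ j ∈ Finset.Icc 2 n, ρ j u) ∂(sphereσ n))
    (hVφL : VφL = (1 / n) * ∫ u,
      φ (ρL u / ρQ u) * (ρQ u * ∏ j ∈ Finset.Icc 2 n, ρ j u) ∂(sphereσ n)) :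
    φ 1 * Vt = VφK + VφL :=
  orlicz_harmonic_sum_decomposition_general n φ hφconv ρK ρL ρQ ρ hKc hQc hKpos hQpos hc hsum Vt VφK
    VφL hVt hVφK hVφL
end

section
/- Let φ : (0,∞) → (0,∞) be convex, strictly decreasing and continuous with φ(0⁺)=∞, φ(∞)=0. Let K, L be star bodies in ℝⁿ, and for ε > 0 define ρ_ε(u) as the unique λ > 0 satisfying φ(ρ(L,u)/λ) + ε·φ(ρ(K,u)/λ) = φ(1). Then for each u ∈ S^{n-1}, ρ_ε(u) → ρ(L,u) as ε → 0⁺. -/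
open MeasureTheory Metric Set Filter

/-- Continuity of the Orlicz harmonic linear combination `L +̂_φ ε·K` as `ε → 0⁺`:
if `ρε ε u` is the unique `λ > 0` with `φ(ρ(L,u)/λ) + ε·φ(ρ(K,u)/λ) = φ(1)`, then
`ρε ε u → ρ(L,u)` as `ε → 0⁺`, for every `u`. -/
theorem orlicz_harmonic_combination_tendsto
    (n : ℕ)
    (φ : ℝ → ℝ)
    (hφconv : ConvexOn ℝ (Ioi 0) φ)
    (hφanti : StrictAntiOn φ (Ioi 0))
    (hφcont : ContinuousOn φ (Ioi 0))
    (hφpos : ∀ t ∈ Ioi (0 : ℝ), 0 < φ t)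
    (hφ0 : Tendsto φ (nhdsWithin 0 (Ioi 0)) atTop)
    (hφtop : Tendsto φ atTop (nhds 0))
    (ρK ρL : sphere (0 : EuclideanSpace ℝ (Fin n)) 1 → ℝ)
    (hKc : Continuous ρK) (hLc : Continuous ρL)
    (hKpos : ∀ u, 0 < ρK u) (hLpos : ∀ u, 0 < ρL u)
    (ρε : ℝ → (sphere (0 : EuclideanSpace ℝ (Fin n)) 1 → ℝ))
    (hρε : ∀ ε > (0 : ℝ), ∀ u, 0 < ρε ε u ∧
      φ (ρL u / ρε ε u) + ε * φ (ρK u / ρε ε u) = φ 1) :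
    ∀ u, Tendsto (fun ε => ρε ε u) (nhdsWithin 0 (Ioi 0)) (nhds (ρL u)) := by
  intro u
  rw [Metric.tendsto_nhdsWithin_nhds]
  intro δ hδ
  have hl : 0 < ρL u := hLpos u
  have hk : 0 < ρK u := hKpos u
  set d : ℝ := min δ (ρL u / 2) with hd
  have hd0 : 0 < d := lt_min hδ (by linarith)
  have hdl : d < ρL u := lt_of_le_of_lt (min_le_right _ _) (by linarith)
  set c : ℝ := ρL u / (ρL u - d) with hc
  have hc1 : 1 < c := (one_lt_div (by linarith)).2 (by linarith)
  have hM : 0 < φ (ρK u / ρL u) := hφpos _ (div_pos hk hl)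
  have hφc : φ c < φ 1 := hφanti (mem_Ioi.2 one_pos) (mem_Ioi.2 (by linarith)) hc1
  refine ⟨(φ 1 - φ c) / φ (ρK u / ρL u), div_pos (by linarith) hM, ?_⟩
  intro ε hε hεd
  have hε0 : (0:ℝ) < ε := hε
  obtain ⟨hρe, heq⟩ := hρε ε hε0 u
  have hεη : ε < (φ 1 - φ c) / φ (ρK u / ρL u) := by
    rwa [Real.dist_eq, sub_zero, abs_of_pos hε0] at hεd
  have hεM : ε * φ (ρK u / ρL u) < φ 1 - φ c := by
    rw [lt_div_iff₀ hM] at hεη; linarith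
  have hKε : 0 < φ (ρK u / ρε ε u) := hφpos _ (div_pos hk hρe)
  have h1 : φ (ρL u / ρε ε u) < φ 1 := by nlinarith
  have hgt1 : 1 < ρL u / ρε ε u := by
    rcases lt_trichotomy (ρL u / ρε ε u) 1 with h | h | h
    · exact absurd (hφanti (mem_Ioi.2 (div_pos hl hρe)) (mem_Ioi.2 one_pos) h)
        (by linarith)
    · rw [h] at h1; linarith
    · exact h
  have hlt : ρε ε u < ρL u := by
    have := (one_lt_div hρe).1 hgt1; linarith
  have hKM : φ (ρK u / ρε ε u) ≤ φ (ρK u / ρL u) := by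
    apply hφanti.antitoneOn (mem_Ioi.2 (div_pos hk hl)) (mem_Ioi.2 (div_pos hk hρe))
    exact div_le_div_of_nonneg_left hk.le hρe hlt.le
  have hgtd : ρL u - d < ρε ε u := by
    by_contra h
    push_neg at h
    have hce : c ≤ ρL u / ρε ε u :=
      div_le_div_of_nonneg_left hl.le hρe h
    have hφce : φ (ρL u / ρε ε u) ≤ φ c :=
      hφanti.antitoneOn (mem_Ioi.2 (by linarith)) (mem_Ioi.2 (div_pos hl hρe)) hce
    nlinarith
  rw [Real.dist_eq, abs_of_neg (by linarith)]
  have : d ≤ δ := min_le_left _ _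
  linarith
end

section
/- Let φ : (0,∞) → (0,∞) be convex, strictly decreasing, differentiable from the right at 1 with right derivative φ'_r(1) ≠ 0, and with φ(0⁺)=∞, φ(∞)=0. Let K, L be star bodies in ℝⁿ, fix u ∈ S^{n-1}, and for ε > 0 let ρ_ε be the unique λ > 0 with φ(ρ(L,u)/λ) + ε·φ(ρ(K,u)/λ) = φ(1). Then lim_{ε→0⁺} (ρ_ε − ρ(L,u))/ε = (1/φ'_r(1)) · φ(ρ(K,u)/ρ(L,u)) · ρ(L,u). -/
open MeasureTheory Metric Set Filter

/-- First-order variational formula for the Orlicz harmonic linear combination: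
if `ρε ε` is the unique `λ > 0` with `φ(ρ(L,u)/λ) + ε·φ(ρ(K,u)/λ) = φ(1)`, and `φ`
has right derivative `d ≠ 0` at `1`, then
`(ρε ε − ρ(L,u))/ε → (1/d)·φ(ρ(K,u)/ρ(L,u))·ρ(L,u)` as `ε → 0⁺`. -/
theorem orlicz_harmonic_combination_first_variation
    (n : ℕ)
    (φ : ℝ → ℝ)
    (hφconv : ConvexOn ℝ (Ioi 0) φ)
    (hφanti : StrictAntiOn φ (Ioi 0))
    (hφpos : ∀ t ∈ Ioi (0 : ℝ), 0 < φ t)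
    (hφ0 : Tendsto φ (nhdsWithin 0 (Ioi 0)) atTop)
    (hφtop : Tendsto φ atTop (nhds 0))
    (d : ℝ) (hd : d ≠ 0)
    (hderiv : HasDerivWithinAt φ d (Ici 1) 1)
    (ρK ρL : sphere (0 : EuclideanSpace ℝ (Fin n)) 1 → ℝ)
    (hKc : Continuous ρK) (hLc : Continuous ρL)
    (hKpos : ∀ u, 0 < ρK u) (hLpos : ∀ u, 0 < ρL u)
    (u : sphere (0 : EuclideanSpace ℝ (Fin n)) 1)
    (ρε : ℝ → ℝ)
    (hρε : ∀ ε > (0 : ℝ), 0 < ρε ε ∧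
      φ (ρL u / ρε ε) + ε * φ (ρK u / ρε ε) = φ 1) :
    Tendsto (fun ε => (ρε ε - ρL u) / ε) (nhdsWithin 0 (Ioi 0))
      (nhds ((1 / d) * φ (ρK u / ρL u) * ρL u)) := by
  set a := ρL u with ha
  set b := ρK u with hb
  have hapos : 0 < a := hLpos u
  have hbpos : 0 < b := hKpos u
  set l := nhdsWithin (0 : ℝ) (Ioi 0) with hl
  set s : ℝ → ℝ := fun ε => a / ρε ε with hs
  have hev : ∀ᶠ ε in l, (0 : ℝ) < ε := eventually_mem_nhdsWithin
  have hrpos : ∀ᶠ ε in l, 0 < ρε ε := hev.mono fun ε hε => (hρε ε hε).1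
  have heq : ∀ᶠ ε in l, φ (a / ρε ε) + ε * φ (b / ρε ε) = φ 1 :=
    hev.mono fun ε hε => (hρε ε hε).2
  -- s ε > 1 eventually
  have hs1 : ∀ᶠ ε in l, 1 < s ε := by
    filter_upwards [hev, hrpos, heq] with ε hε hr he
    have hbr : (0:ℝ) < b / ρε ε := div_pos hbpos hr
    have har : (0:ℝ) < a / ρε ε := div_pos hapos hr
    have hlt : φ (a / ρε ε) < φ 1 := by
      have := mul_pos hε (hφpos _ hbr); linarith
    by_contra hle
    push_neg at hle
    rcases eq_or_lt_of_le hle with h | h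
    · simp only [hs] at h; rw [h] at hlt; exact lt_irrefl _ hlt
    · exact absurd (hφanti har (mem_Ioi.2 one_pos) h) (not_lt.2 hlt.le)
  -- s ε → 1
  have hslim : Tendsto s l (nhds 1) := by
    rw [tendsto_order]
    constructor
    · intro c hc
      filter_upwards [hs1] with ε h1
      exact lt_trans hc h1
    · intro c hc
      have hcpos : (0:ℝ) < c := lt_trans one_pos hc
      have hφc : φ c < φ 1 := hφanti (mem_Ioi.2 one_pos) (mem_Ioi.2 hcpos) hc
      have hφba : 0 < φ (b / a) := hφpos _ (mem_Ioi.2 (div_pos hbpos hapos))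
      set ε₀ := (φ 1 - φ c) / φ (b / a) with hε₀
      have hε₀pos : 0 < ε₀ := div_pos (by linarith) hφba
      have hmem : Iio ε₀ ∈ l := mem_nhdsWithin_of_mem_nhds (Iio_mem_nhds hε₀pos)
      filter_upwards [hev, hrpos, heq, hs1, hmem] with ε hε hr he h1 hlt₀
      -- r < a
      have hra : ρε ε < a := by
        have : 1 < a / ρε ε := h1
        calc ρε ε = ρε ε * 1 := (mul_one _).symm
        _ < ρε ε * (a / ρε ε) := by exact (mul_lt_mul_iff_right₀ hr).2 this
        _ = a := by field_simp
      have hbr : b / a < b / ρε ε := div_lt_div_of_pos_left hbpos hr hra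
      have hφbr : φ (b / ρε ε) < φ (b / a) :=
        hφanti (mem_Ioi.2 (div_pos hbpos hapos)) (mem_Ioi.2 (div_pos hbpos hr)) hbr
      have hφbrpos : 0 < φ (b / ρε ε) := hφpos _ (mem_Ioi.2 (div_pos hbpos hr))
      have hsmall : ε * φ (b / ρε ε) < ε₀ * φ (b / a) :=
        mul_lt_mul hlt₀ hφbr.le hφbrpos hε₀pos.le
      have hq : ε₀ * φ (b / a) = φ 1 - φ c := by
        rw [hε₀]; field_simp
      have hφs : φ c < φ (s ε) := by
        have : φ (s ε) = φ 1 - ε * φ (b / ρε ε) := by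
          have := he; simp only [hs]; linarith
        rw [this]; linarith
      by_contra hle
      push_neg at hle
      rcases eq_or_lt_of_le hle with h | h
      · rw [← h] at hφs; exact lt_irrefl _ hφs
      · have := hφanti (mem_Ioi.2 hcpos) (mem_Ioi.2 (lt_trans hcpos h)) h
        linarith
  -- ρε → a
  have hrlim : Tendsto ρε l (nhds a) := by
    have h1 : Tendsto (fun ε => a / s ε) l (nhds (a / 1)) :=
      tendsto_const_nhds.div hslim one_ne_zero
    rw [div_one] at h1
    refine h1.congr' ?_
    filter_upwards [hrpos] with ε hr
    simp only [hs]
    field_simp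
  -- continuity of φ on Ioi 0
  have hcont : ContinuousOn φ (Ioi 0) := hφconv.continuousOn isOpen_Ioi
  have hφbrlim : Tendsto (fun ε => φ (b / ρε ε)) l (nhds (φ (b / a))) := by
    have hba : b / a ∈ Ioi (0:ℝ) := mem_Ioi.2 (div_pos hbpos hapos)
    have hca : ContinuousAt φ (b / a) :=
      hcont.continuousAt (isOpen_Ioi.mem_nhds hba)
    exact hca.tendsto.comp (tendsto_const_nhds.div hrlim hapos.ne')
  -- slope tendsto
  have hslope : Tendsto (fun ε => slope φ 1 (s ε)) l (nhds d) := by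
    have h2 : Tendsto (slope φ 1) (nhdsWithin 1 (Ici 1 \ {1})) (nhds d) :=
      hasDerivWithinAt_iff_tendsto_slope.mp hderiv
    rw [Set.Ici_sdiff_left] at h2
    exact h2.comp (tendsto_nhdsWithin_iff.mpr ⟨hslim, hs1⟩)
  -- combine
  have hfin : Tendsto (fun ε => (a / s ε) * φ (b / ρε ε) / slope φ 1 (s ε)) l
      (nhds ((a / 1) * φ (b / a) / d)) :=
    ((tendsto_const_nhds.div hslim one_ne_zero).mul hφbrlim).div hslope hd
  have hval : (a / 1) * φ (b / a) / d = (1 / d) * φ (b / a) * a := by ring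
  rw [hval] at hfin
  refine hfin.congr' ?_
  filter_upwards [hev, hrpos, heq, hs1] with ε hε hr he h1
  have hkey : φ (s ε) - φ 1 = -(ε * φ (b / ρε ε)) := by
    simp only [hs]; linarith
  have hφbrpos : 0 < φ (b / ρε ε) := hφpos _ (mem_Ioi.2 (div_pos hbpos hr))
  have hsne : s ε ≠ 0 := (lt_trans one_pos h1).ne'
  have hs1ne : s ε - 1 ≠ 0 := sub_ne_zero.2 h1.ne'
  rw [slope_def_field, hkey]
  simp only [hs] at hsne hs1ne ⊢
  field_simp
  ring
end
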